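/- Let T be a tree and let b : L(T) → ℤ be a function on its legs with Σ_{p∈L(T)} b(p) = 0. Then there exists a unique harmonic slope assignment s : H(T) → ℤ on T with s(p) = b(p) for every leg p ∈ L(T). -/

import Mathlib

/-!
Call *flows* the functions on half-edges that vanish off the edges and take opposite values on
the two halves of each edge; a slope assignment with leg values `b` is a flow plus `b` on the
legs. On a connected graph every function on the vertices with total sum zero is the divergence
of an integral flow: the flow `δ_a - δ_{ι a}` along one edge has divergence `δ_{r a} - δ_{r (ι a)}`,
and connectivity propagates this to `δ_v - δ_w` for any two vertices. Applied to minus the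
divergence of the leg values, whose total is `Σ b = 0`, this gives existence.
For uniqueness, over `ℚ` the divergence maps the `#E`-dimensional space of flows onto the
`(#V - 1)`-dimensional space of zero-sum functions, so its kernel has dimension at most
`#E - #V + 1 = -Σ g(v) ≤ 0`: on a tree a harmonic flow is zero.
-/

namespace TropDR

open Finset

/-- `Finset.filter` with classical decidability. -/
noncomputable def cfilter {α : Type*} (p : α → Prop) (s : Finset α) : Finset α :=
  @Finset.filter α p (Classical.decPred p) s

/-- A graph with legs: a finite set `X` together with an idempotent root map `rt`
and an involution `inv` fixing every root vertex. -/
structure PGraph where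
  X : Type
  [fintypeX : Fintype X]
  [decEqX : DecidableEq X]
  rt : X → X
  inv : X → X
  rt_idem : ∀ x, rt (rt x) = rt x
  inv_invol : ∀ x, inv (inv x) = x
  inv_fix_rt : ∀ x, inv (rt x) = rt x

attribute [instance] PGraph.fintypeX PGraph.decEqX

namespace PGraph

variable (G : PGraph)

/-- Vertices are the fixed points (= the image) of the root map. -/
def IsVertex (x : G.X) : Prop := G.rt x = x

/-- Half-edges are the non-vertices. -/
def IsHalf (x : G.X) : Prop := G.rt x ≠ x

/-- Legs are the `inv`-fixed half-edges. -/
def IsLeg (x : G.X) : Prop := G.IsHalf x ∧ G.inv x = x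

/-- Halves of genuine edges: half-edges moved by the involution. -/
def IsEdgeHalf (x : G.X) : Prop := G.IsHalf x ∧ G.inv x ≠ x

noncomputable def vertexSet : Finset G.X := cfilter (fun x => G.IsVertex x) Finset.univ

noncomputable def legSet : Finset G.X := cfilter (fun x => G.IsLeg x) Finset.univ

noncomputable def edgeHalfSet : Finset G.X := cfilter (fun x => G.IsEdgeHalf x) Finset.univ

/-- Tangent directions at a vertex `v`: half-edges rooted at `v`. -/
noncomputable def tangents (v : G.X) : Finset G.X :=
  cfilter (fun h => G.IsHalf h ∧ G.rt h = v) Finset.univ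

noncomputable def valence (v : G.X) : ℕ := (G.tangents v).card

/-- The number of edges: half the number of edge half-edges. -/
noncomputable def numEdges : ℕ := G.edgeHalfSet.card / 2

noncomputable def numLegs : ℕ := G.legSet.card

noncomputable def numVertices : ℕ := G.vertexSet.card

/-- Connectedness: the equivalence relation generated by `x ∼ rt x` and `x ∼ inv x`
has a single class (and `X` is nonempty). -/
def Connected : Prop :=
  Nonempty G.X ∧ ∀ x y : G.X, Relation.EqvGen (fun a b => G.rt a = b ∨ G.inv a = b) x y

/-- A subgraph: a subset of `X` closed under the root map and the involution. -/
def IsSubgraph (F : Finset G.X) : Prop :=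
  (∀ x ∈ F, G.rt x ∈ F) ∧ (∀ x ∈ F, G.inv x ∈ F)

/-- Valency of `v` inside a subgraph `F`. -/
noncomputable def valIn (F : Finset G.X) (v : G.X) : ℕ := (G.tangents v ∩ F).card

end PGraph

/-- A morphism of graphs: commutes with the root maps and involutions,
and maps no edge into a leg. -/
structure GraphHom (G' G : PGraph) where
  toFun : G'.X → G.X
  map_rt : ∀ x, toFun (G'.rt x) = G.rt (toFun x)
  map_inv : ∀ x, toFun (G'.inv x) = G.inv (toFun x)
  edge_not_leg : ∀ h, G'.IsEdgeHalf h → ¬ G.IsLeg (toFun h)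

/-- A harmonic morphism of graphs: a graph morphism together with a degree function. -/
structure HarmonicHom (G' G : PGraph) extends GraphHom G' G where
  deg : G'.X → ℕ
  deg_edge : ∀ h, G'.IsEdgeHalf h → deg (G'.inv h) = deg h
  deg_zero_iff : ∀ h, G'.IsHalf h → (deg h = 0 ↔ G.IsVertex (toFun h))
  harmonic : ∀ v', G'.IsVertex v' → ∀ h, G.IsHalf h → G.rt h = toFun v' →
    deg v' = ∑ h' ∈ cfilter (fun h' => toFun h' = h) (G'.tangents v'), deg h'

namespace HarmonicHom

variable {G' G : PGraph} (φ : HarmonicHom G' G)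

/-- A harmonic morphism is finite if it has positive degree on every half-edge. -/
def Finite : Prop := ∀ h, G'.IsHalf h → 0 < φ.deg h

/-- The sum of the degrees over the vertex fiber of `v`. -/
noncomputable def vertexFiberDeg (v : G.X) : ℕ :=
  ∑ v' ∈ cfilter (fun v' => φ.toFun v' = v) G'.vertexSet, φ.deg v'

end HarmonicHom

/-- A weighted graph: a graph together with a genus function on (all elements;
only the values at vertices are relevant). -/
structure WGraph extends PGraph where
  gw : X → ℕ

namespace WGraph

variable (G : WGraph)

/-- The genus of a (connected) weighted graph. -/
noncomputable def genus : ℤ :=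
  (G.toPGraph.numEdges : ℤ) - (G.toPGraph.numVertices : ℤ) + 1 +
    ∑ v ∈ G.toPGraph.vertexSet, (G.gw v : ℤ)

/-- The Euler characteristic of a vertex. -/
noncomputable def chiV (v : G.X) : ℤ :=
  2 - 2 * (G.gw v : ℤ) - (G.toPGraph.valence v : ℤ)

/-- The Euler characteristic of a (connected) weighted graph. -/
noncomputable def chi : ℤ := 2 - 2 * G.genus - (G.toPGraph.numLegs : ℤ)

end WGraph

/-- The ramification degree of a (finite) harmonic morphism of weighted graphs at `v'`. -/
noncomputable def ram {G' G : WGraph} (φ : HarmonicHom G'.toPGraph G.toPGraph) (v' : G'.X) : ℤ :=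
  (φ.deg v' : ℤ) * G.chiV (φ.toFun v') - G'.chiV v'

def Unramified {G' G : WGraph} (φ : HarmonicHom G'.toPGraph G.toPGraph) : Prop :=
  ∀ v', G'.toPGraph.IsVertex v' → ram φ v' = 0

def Effective {G' G : WGraph} (φ : HarmonicHom G'.toPGraph G.toPGraph) : Prop :=
  ∀ v', G'.toPGraph.IsVertex v' → 0 ≤ ram φ v'

/-- A tree: a connected weighted graph of genus zero. -/
def IsTree (T : WGraph) : Prop := T.toPGraph.Connected ∧ T.genus = 0

/-- A hyperelliptic morphism: a finite harmonic morphism of degree two onto a tree, such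
that `d_φ(v) = 2` at every vertex of positive weight. -/
def IsHyperelliptic {G T : WGraph} (φ : HarmonicHom G.toPGraph T.toPGraph) : Prop :=
  φ.Finite ∧ IsTree T ∧ (∀ v, T.toPGraph.IsVertex v → φ.vertexFiberDeg v = 2) ∧
    (∀ v, G.toPGraph.IsVertex v → 0 < G.gw v → φ.deg v = 2)
/-- A slope assignment on a graph `G`: an integer on each half-edge (extended by zero on
the vertices), antisymmetric on the two halves of every edge. -/
structure SlopeAssignment (G : PGraph) where
  s : G.X → ℤ
  vertex_zero : ∀ x, G.IsVertex x → s x = 0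
  edge_antisym : ∀ h, G.IsEdgeHalf h → s (G.inv h) = - s h

/-- A slope assignment is harmonic if the outgoing slopes at every vertex sum to zero. -/
def SlopeAssignment.Harmonic {G : PGraph} (σ : SlopeAssignment G) : Prop :=
  ∀ v, G.IsVertex v → ∑ h ∈ G.tangents v, σ.s h = 0

theorem mem_cfilter {α : Type*} {p : α → Prop} {s : Finset α} {x : α} :
    x ∈ cfilter p s ↔ x ∈ s ∧ p x := by
  classical
  rw [cfilter, Finset.filter_congr_decidable, Finset.mem_filter]

namespace PGraph

variable {G : PGraph} {x : G.X}

theorem mem_tangents {v : G.X} : x ∈ G.tangents v ↔ G.IsHalf x ∧ G.rt x = v := by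
  simp [tangents, mem_cfilter]

theorem mem_legSet : x ∈ G.legSet ↔ G.IsLeg x := by
  simp [legSet, mem_cfilter]

theorem mem_vertexSet : x ∈ G.vertexSet ↔ G.IsVertex x := by
  simp [vertexSet, mem_cfilter]

theorem mem_edgeHalfSet : x ∈ G.edgeHalfSet ↔ G.IsEdgeHalf x := by
  simp [edgeHalfSet, mem_cfilter]

theorem inv_eq_self_of_isVertex (hx : G.IsVertex x) : G.inv x = x := by
  have h := G.inv_fix_rt x
  rwa [show G.rt x = x from hx] at h

theorem inv_eq_self_of_not_isEdgeHalf (hx : ¬ G.IsEdgeHalf x) : G.inv x = x := by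
  by_cases hv : G.IsVertex x
  · exact inv_eq_self_of_isVertex hv
  · by_contra hinv
    exact hx ⟨hv, hinv⟩

theorem IsEdgeHalf.inv (hx : G.IsEdgeHalf x) : G.IsEdgeHalf (G.inv x) := by
  refine ⟨fun hv => hx.2 ?_, fun h => hx.2 ?_⟩
  · simpa only [G.inv_invol] using (inv_eq_self_of_isVertex hv).symm
  · simpa only [G.inv_invol] using congrArg G.inv h

theorem exists_orientation (G : PGraph) : ∃ O : Finset G.X,
    2 * O.card ≤ G.edgeHalfSet.card ∧ ∀ h, G.IsEdgeHalf h → h ∈ O ∨ G.inv h ∈ O := by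
  let e := Fintype.equivFin G.X
  let O := G.edgeHalfSet.filter fun h => e h < e (G.inv h)
  have hdisj : Disjoint O (O.image G.inv) := by
    rw [Finset.disjoint_left]
    intro h hO hO'
    obtain ⟨k, hk, rfl⟩ := Finset.mem_image.1 hO'
    have h1 := (Finset.mem_filter.1 hO).2
    have h2 := (Finset.mem_filter.1 hk).2
    rw [G.inv_invol] at h1
    exact lt_asymm h1 h2
  have hsub : O ∪ O.image G.inv ⊆ G.edgeHalfSet := by
    intro h hh
    rcases Finset.mem_union.1 hh with hO | hO
    · exact (Finset.mem_filter.1 hO).1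
    · obtain ⟨k, hk, rfl⟩ := Finset.mem_image.1 hO
      exact mem_edgeHalfSet.2 (mem_edgeHalfSet.1 (Finset.mem_filter.1 hk).1).inv
  refine ⟨O, ?_, fun h hh => ?_⟩
  · have := Finset.card_le_card hsub
    rw [Finset.card_union_of_disjoint hdisj, Finset.card_image_of_injective _
      (Function.Involutive.injective G.inv_invol)] at this
    omega
  · have hne : e h ≠ e (G.inv h) := fun heq => hh.2 (e.injective heq).symm
    rcases hne.lt_or_gt with hlt | hgt
    · exact Or.inl (Finset.mem_filter.2 ⟨mem_edgeHalfSet.2 hh, hlt⟩)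
    · refine Or.inr (Finset.mem_filter.2 ⟨mem_edgeHalfSet.2 hh.inv, ?_⟩)
      rwa [G.inv_invol]

section Flows

variable (G) (R M : Type*) [Ring R] [AddCommGroup M] [Module R M]

def flows : Submodule R (G.X → M) where
  carrier :=
    {s | (∀ x, ¬ G.IsEdgeHalf x → s x = 0) ∧ ∀ h, G.IsEdgeHalf h → s (G.inv h) = -s h}
  add_mem' {s t} hs ht :=
    ⟨fun x hx => by simp [hs.1 x hx, ht.1 x hx],
      fun h hh => by simp [hs.2 h hh, ht.2 h hh, add_comm]⟩
  zero_mem' := ⟨fun _ _ => rfl, fun _ _ => by simp⟩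
  smul_mem' c s hs := ⟨fun x hx => by simp [hs.1 x hx], fun h hh => by simp [hs.2 h hh]⟩

noncomputable def divergence : (G.X → M) →ₗ[R] (G.X → M) where
  toFun s v := ∑ h ∈ G.tangents v, s h
  map_add' s t := by ext v; simp [Finset.sum_add_distrib]
  map_smul' c s := by ext v; simp [Finset.smul_sum]

variable {G R M}

theorem divergence_apply (s : G.X → M) (v : G.X) :
    G.divergence R M s v = ∑ h ∈ G.tangents v, s h := rfl

theorem divergence_single {a : G.X} (ha : G.IsHalf a) (m : M) :
    G.divergence R M (Pi.single a m) = Pi.single (G.rt a) m := by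
  ext v
  simp [divergence_apply, mem_tangents, ha, Pi.single_apply, eq_comm]

theorem sum_divergence {s : G.X → M} (hs : ∀ v, G.IsVertex v → s v = 0) :
    ∑ v ∈ G.vertexSet, G.divergence R M s v = ∑ x, s x := by
  rw [← Finset.sum_fiberwise_of_maps_to (s := Finset.univ) (t := G.vertexSet) (g := G.rt)
    (f := s) fun x _ => mem_vertexSet.2 (G.rt_idem x)]
  refine Finset.sum_congr rfl fun v _ => Finset.sum_subset (fun h hh => ?_) fun h hh hnot => ?_
  · simpa using (mem_tangents.1 hh).2
  · refine hs h (not_not.1 fun hhalf => hnot (mem_tangents.2 ⟨hhalf, ?_⟩))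
    simpa using hh

theorem comp_mem_flows {S N : Type*} [Ring S] [AddCommGroup N] [Module S N] (φ : M →+ N)
    {s : G.X → M} (hs : s ∈ G.flows R M) : φ ∘ s ∈ G.flows S N :=
  ⟨fun x hx => by simp [hs.1 x hx], fun h hh => by simp [hs.2 h hh]⟩

theorem divergence_comp {S N : Type*} [Ring S] [AddCommGroup N] [Module S N] (φ : M →+ N)
    (s : G.X → M) : G.divergence S N (φ ∘ s) = φ ∘ G.divergence R M s := by
  ext v
  simp [divergence_apply]

theorem single_sub_single_inv_mem_flows {a : G.X} (ha : G.IsEdgeHalf a) (m : M) :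
    Pi.single a m - Pi.single (G.inv a) m ∈ G.flows R M := by
  refine ⟨fun x hx => ?_, fun h _ => ?_⟩
  · have hxa : x ≠ a := fun h => hx (h ▸ ha)
    have hxa' : x ≠ G.inv a := fun h => hx (h ▸ ha.inv)
    simp [hxa, hxa']
  · simp only [Pi.sub_apply, Pi.single_apply, Function.Involutive.eq_iff G.inv_invol, G.inv_invol]
    split_ifs <;> simp

theorem single_rt_sub_single_rt_mem_map_flows (hconn : G.Connected) (x y : G.X) (m : M) :
    Pi.single (G.rt x) m - Pi.single (G.rt y) m ∈ (G.flows R M).map (G.divergence R M) := by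
  induction hconn.2 x y with
  | rel a b hab =>
    rcases hab with rfl | rfl
    · simp [G.rt_idem]
    · by_cases ha : G.IsEdgeHalf a
      · refine ⟨_, single_sub_single_inv_mem_flows ha m, ?_⟩
        simp [divergence_single ha.1, divergence_single ha.inv.1]
      · simp [inv_eq_self_of_not_isEdgeHalf ha]
  | refl => simp
  | symm a b _ ih => simpa using neg_mem ih
  | trans a b c _ _ ihab ihbc => simpa using add_mem ihab ihbc

theorem exists_mem_flows_divergence_eq (hconn : G.Connected) (f : G.X → M)
    (hf : ∑ v ∈ G.vertexSet, f v = 0) :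
    ∃ s ∈ G.flows R M, ∀ v, G.IsVertex v → G.divergence R M s v = f v := by
  obtain ⟨x₀⟩ := hconn.1
  have hmem : ∑ v ∈ G.vertexSet, (Pi.single v (f v) - Pi.single (G.rt x₀) (f v)) ∈
      (G.flows R M).map (G.divergence R M) :=
    Submodule.sum_mem _ fun v hv => by
      have h := single_rt_sub_single_rt_mem_map_flows (R := R) hconn v x₀ (f v)
      rwa [show G.rt v = v from mem_vertexSet.1 hv] at h
  obtain ⟨s, hs, hsf⟩ := hmem
  refine ⟨s, hs, fun v hv => ?_⟩
  rw [hsf, Finset.sum_apply]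
  simp [mem_vertexSet.2 hv, Pi.single_apply, hf]

theorem eq_zero_of_mem_flows_of_eqOn_zero {O : Finset G.X}
    (hO : ∀ h, G.IsEdgeHalf h → h ∈ O ∨ G.inv h ∈ O) {s : G.X → M}
    (hs : s ∈ G.flows R M) (hsO : ∀ h ∈ O, s h = 0) : s = 0 := by
  ext x
  by_cases hx : G.IsEdgeHalf x
  · rcases hO x hx with h | h
    · exact hsO x h
    · simpa [hs.2 x hx] using hsO _ h
  · exact hs.1 x hx

theorem eq_zero_of_mem_flows_of_divergence_eq_zero {K : Type*} [Field K]
    (hconn : G.Connected) (hcard : G.numEdges + 1 ≤ G.numVertices) {s : G.X → K}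
    (hs : s ∈ G.flows K K)
    (hdiv : ∀ v, G.IsVertex v → G.divergence K K s v = 0) : s = 0 := by
  obtain ⟨O, hOcard, hO⟩ := exists_orientation G
  let res : G.flows K K →ₗ[K] (O → K) :=
    LinearMap.funLeft K K Subtype.val ∘ₗ Submodule.subtype _
  let δ : G.flows K K →ₗ[K] (G.vertexSet → K) :=
    LinearMap.funLeft K K Subtype.val ∘ₗ G.divergence K K ∘ₗ Submodule.subtype _
  let total : (G.vertexSet → K) →ₗ[K] K := ∑ v, LinearMap.proj v
  have hres : Function.Injective res := by
    rw [← LinearMap.ker_eq_bot, LinearMap.ker_eq_bot']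
    intro t ht
    exact Subtype.ext (eq_zero_of_mem_flows_of_eqOn_zero hO t.2 fun h hh => congrFun ht ⟨h, hh⟩)
  have hrange : LinearMap.ker total ≤ LinearMap.range δ := by
    intro f hf
    obtain ⟨t, ht, htf⟩ := exists_mem_flows_divergence_eq (R := K) hconn
      (fun x => if hx : x ∈ G.vertexSet then f ⟨x, hx⟩ else 0)
      (by rw [← Finset.sum_coe_sort]; simpa [total] using hf)
    exact ⟨⟨t, ht⟩, funext fun v => by simpa [δ] using htf v (mem_vertexSet.1 v.2)⟩
  -- `dim ker δ = dim flows - rank δ ≤ #E - (#V - 1) ≤ 0`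
  have h1 := LinearMap.finrank_range_add_finrank_ker total
  have h2 := LinearMap.finrank_range_add_finrank_ker δ
  have h3 := Submodule.finrank_mono hrange
  have h4 := Submodule.finrank_le (LinearMap.range total)
  have h5 := LinearMap.finrank_le_finrank_of_injective hres
  simp only [Module.finrank_self, Module.finrank_fintype_fun_eq_card, Fintype.card_coe] at h1 h4 h5
  have hker : LinearMap.ker δ = ⊥ := by
    rw [← Submodule.finrank_eq_zero]
    unfold numEdges numVertices at hcard
    omega
  have hδ : δ ⟨s, hs⟩ = 0 := funext fun v => hdiv v (mem_vertexSet.1 v.2)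
  simpa using LinearMap.ker_eq_bot'.1 hker _ hδ

end Flows

end PGraph

namespace SlopeAssignment

variable {G : PGraph}

theorem ext {σ τ : SlopeAssignment G} (h : σ.s = τ.s) : σ = τ := by
  cases σ
  cases τ
  congr

theorem sub_mem_flows {σ τ : SlopeAssignment G} (hleg : ∀ p, G.IsLeg p → σ.s p = τ.s p) :
    σ.s - τ.s ∈ G.flows ℤ ℤ := by
  refine ⟨fun x hx => ?_, fun h hh => ?_⟩
  · by_cases hv : G.IsVertex x
    · simp [σ.vertex_zero x hv, τ.vertex_zero x hv]
    · simp [hleg x ⟨hv, PGraph.inv_eq_self_of_not_isEdgeHalf hx⟩]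
  · simp only [Pi.sub_apply, σ.edge_antisym h hh, τ.edge_antisym h hh]
    ring

theorem exists_harmonic (hconn : G.Connected) (b : G.X → ℤ)
    (hb : ∑ p ∈ G.legSet, b p = 0) :
    ∃ σ : SlopeAssignment G, σ.Harmonic ∧ ∀ p, G.IsLeg p → σ.s p = b p := by
  let ℓ : G.X → ℤ := fun x => if x ∈ G.legSet then b x else 0
  have hℓv : ∀ v, G.IsVertex v → ℓ v = 0 := fun v hv =>
    if_neg fun h => (PGraph.mem_legSet.1 h).1 hv
  have hℓe : ∀ h, G.IsEdgeHalf h → ℓ h = 0 := fun h hh =>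
    if_neg fun h' => hh.2 (PGraph.mem_legSet.1 h').2
  obtain ⟨s, hs, hdiv⟩ := PGraph.exists_mem_flows_divergence_eq (R := ℤ) hconn
    (-G.divergence ℤ ℤ ℓ) (by simp [PGraph.sum_divergence hℓv, ℓ, Finset.sum_ite_mem, hb])
  refine ⟨⟨s + ℓ, fun x hx => ?_, fun h hh => ?_⟩, fun v hv => ?_, fun p hp => ?_⟩
  · simp [hs.1 x fun h => h.1 hx, hℓv x hx]
  · simp [hs.2 h hh, hℓe h hh, hℓe _ hh.inv]
  · have := hdiv v hv
    simp only [PGraph.divergence_apply, Pi.neg_apply] at this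
    simp [Finset.sum_add_distrib, this]
  · simp [hs.1 p fun h => h.2 hp.2, ℓ, PGraph.mem_legSet.2 hp]

theorem eq_of_harmonic (hconn : G.Connected) (hcard : G.numEdges + 1 ≤ G.numVertices)
    {σ τ : SlopeAssignment G} (hσ : σ.Harmonic) (hτ : τ.Harmonic)
    (hleg : ∀ p, G.IsLeg p → σ.s p = τ.s p) : σ = τ := by
  have hdiv : ∀ v, G.IsVertex v →
      G.divergence ℚ ℚ (Int.castAddHom ℚ ∘ (σ.s - τ.s)) v = 0 := fun v hv => by
    rw [PGraph.divergence_comp (R := ℤ), Function.comp_apply, map_sub]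
    simp [PGraph.divergence_apply, hσ v hv, hτ v hv]
  have h := PGraph.eq_zero_of_mem_flows_of_divergence_eq_zero hconn hcard
    (PGraph.comp_mem_flows _ (sub_mem_flows hleg)) hdiv
  refine ext (funext fun x => ?_)
  simpa [sub_eq_zero] using congrFun h x

end SlopeAssignment

theorem IsTree.numEdges_add_one_le {T : WGraph} (hT : IsTree T) :
    T.numEdges + 1 ≤ T.numVertices := by
  have hg : 0 ≤ ∑ v ∈ T.vertexSet, (T.gw v : ℤ) :=
    Finset.sum_nonneg fun _ _ => by positivity
  have := hT.2
  unfold WGraph.genus at this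
  omega

/-- Let `T` be a tree and `b` a function on its legs with
`Σ_{p ∈ L(T)} b(p) = 0`.  Then there is a unique harmonic slope assignment `s` on `T`
with `s(p) = b(p)` for every leg `p`. -/
theorem unique_harmonic_slopes_on_tree
    (T : WGraph) (hT : IsTree T) (b : T.X → ℤ)
    (hb : ∑ p ∈ T.toPGraph.legSet, b p = 0) :
    ∃! σ : SlopeAssignment T.toPGraph,
      σ.Harmonic ∧ ∀ p, T.toPGraph.IsLeg p → σ.s p = b p := by
  obtain ⟨σ, hσ, hσb⟩ := SlopeAssignment.exists_harmonic hT.1 b hb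
  refine ⟨σ, ⟨hσ, hσb⟩, fun τ ⟨hτ, hτb⟩ => ?_⟩
  exact SlopeAssignment.eq_of_harmonic hT.1 hT.numEdges_add_one_le hτ hσ
    fun p hp => (hτb p hp).trans (hσb p hp).symm

end TropDR
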